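/- (Rank perturbation interlacing) If A and B are n×n Hermitian matrices with rank(A − B) ≤ r, then their decreasingly ordered eigenvalues satisfy α_{k+r} ≤ β_k and β_{k+r} ≤ α_k for all k with k + r ≤ n. -/

import Mathlib

/-!
Let `U` be spanned by eigenvectors of `A` for `α₀, …, α_{k+r}`, `V` by eigenvectors of `B` for
`β_k, …, β_{n-1}`, and let `K = ker (A - B)`. Their dimensions `k + r + 1`, `n - k` and `≥ n - r`
add up to more than `2 n`, so some `x ≠ 0` lies in all three, and then
`α_{k+r} ‖x‖² ≤ re ⟪x, A x⟫ = re ⟪x, B x⟫ ≤ β_k ‖x‖²`. Exchanging `A` and `B` gives the other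
inequality.
-/

open Matrix BigOperators

/-- `α` is the list of eigenvalues of the Hermitian matrix `A`
in weakly decreasing order (with multiplicity). -/
def IsEigSeq {n : ℕ} (A : Matrix (Fin n) (Fin n) ℂ) (hA : A.IsHermitian)
    (α : Fin n → ℝ) : Prop :=
  Antitone α ∧ ∃ σ : Equiv.Perm (Fin n), ∀ i, α i = hA.eigenvalues (σ i)

open Module Submodule

theorem Submodule.inf_inf_ne_bot_of_finrank_lt {K V : Type*} [DivisionRing K] [AddCommGroup V]
    [Module K V] [FiniteDimensional K V] {U W X : Submodule K V}
    (h : 2 * finrank K V < finrank K U + finrank K W + finrank K X) : U ⊓ W ⊓ X ≠ ⊥ := by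
  intro hbot
  have hUW := finrank_sup_add_finrank_inf_eq U W
  have hsup := (U ⊔ W).finrank_le
  have hdisj := finrank_add_finrank_le_of_disjoint (disjoint_iff.mpr hbot)
  omega

namespace OrthonormalBasis

variable {𝕜 E ι : Type*} [RCLike 𝕜] [NormedAddCommGroup E] [InnerProductSpace 𝕜 E] [Fintype ι]
  (b : OrthonormalBasis ι 𝕜 E)

theorem inner_eq_zero_of_mem_span {S : Set ι} {j : ι} (hj : j ∉ S) {x : E}
    (hx : x ∈ span 𝕜 (b '' S)) : inner 𝕜 (b j) x = 0 := by
  refine (span_le (p := LinearMap.ker (innerₛₗ 𝕜 (b j)))).mpr ?_ hx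
  rintro _ ⟨i, hi, rfl⟩
  exact b.orthonormal.2 (ne_of_mem_of_not_mem hi hj).symm

theorem finrank_span_image (S : Finset ι) : finrank 𝕜 (span 𝕜 (b '' S)) = S.card := by
  have hli : LinearIndependent 𝕜 fun i : (S : Set ι) => b i :=
    b.orthonormal.linearIndependent.comp _ Subtype.val_injective
  rw [Set.image_eq_range, finrank_span_eq_card hli]
  simp

variable {b} {T : E →ₗ[𝕜] E} {μ : ι → ℝ}

theorem re_inner_map_self_eq_sum (hT : ∀ i, T (b i) = (μ i : 𝕜) • b i) (x : E) :
    RCLike.re (inner 𝕜 x (T x)) = ∑ i, μ i * ‖inner 𝕜 (b i) x‖ ^ 2 := by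
  nth_rw 2 [← b.sum_repr' x]
  simp only [map_sum, map_smul, hT, inner_sum, inner_smul_right, ← inner_conj_symm (b _) x,
    mul_left_comm _ (μ _ : 𝕜), RCLike.conj_mul, RCLike.norm_conj]
  norm_cast

theorem mul_norm_sq_le_re_inner_map_self (hT : ∀ i, T (b i) = (μ i : 𝕜) • b i) {S : Set ι}
    {t : ℝ} (ht : ∀ i ∈ S, t ≤ μ i) {x : E} (hx : x ∈ span 𝕜 (b '' S)) :
    t * ‖x‖ ^ 2 ≤ RCLike.re (inner 𝕜 x (T x)) := by
  rw [re_inner_map_self_eq_sum hT, ← b.sum_sq_norm_inner_right, Finset.mul_sum]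
  refine Finset.sum_le_sum fun i _ => ?_
  by_cases hi : i ∈ S
  · exact mul_le_mul_of_nonneg_right (ht i hi) (by positivity)
  · simp [b.inner_eq_zero_of_mem_span hi hx]

theorem re_inner_map_self_le_mul_norm_sq (hT : ∀ i, T (b i) = (μ i : 𝕜) • b i) {S : Set ι}
    {s : ℝ} (hs : ∀ i ∈ S, μ i ≤ s) {x : E} (hx : x ∈ span 𝕜 (b '' S)) :
    RCLike.re (inner 𝕜 x (T x)) ≤ s * ‖x‖ ^ 2 := by
  rw [re_inner_map_self_eq_sum hT, ← b.sum_sq_norm_inner_right, Finset.mul_sum]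
  refine Finset.sum_le_sum fun i _ => ?_
  by_cases hi : i ∈ S
  · exact mul_le_mul_of_nonneg_right (hs i hi) (by positivity)
  · simp [b.inner_eq_zero_of_mem_span hi hx]

end OrthonormalBasis

namespace LinearMap

variable {𝕜 E : Type*} [RCLike 𝕜] [NormedAddCommGroup E] [InnerProductSpace 𝕜 E]

theorem le_of_apply_eq_of_mem_span_eigenvectors {ι ι' : Type*} [Fintype ι] [Fintype ι']
    {b : OrthonormalBasis ι 𝕜 E} {b' : OrthonormalBasis ι' 𝕜 E} {T T' : E →ₗ[𝕜] E}
    {μ : ι → ℝ} {μ' : ι' → ℝ} (hT : ∀ i, T (b i) = (μ i : 𝕜) • b i)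
    (hT' : ∀ i, T' (b' i) = (μ' i : 𝕜) • b' i) {S : Set ι} {S' : Set ι'} {t s : ℝ}
    (ht : ∀ i ∈ S, t ≤ μ i) (hs : ∀ i ∈ S', μ' i ≤ s) {x : E} (hx : x ≠ 0)
    (hxS : x ∈ span 𝕜 (b '' S)) (hxS' : x ∈ span 𝕜 (b' '' S')) (hTx : T x = T' x) :
    t ≤ s := by
  refine le_of_mul_le_mul_right ?_ (by positivity : 0 < ‖x‖ ^ 2)
  calc t * ‖x‖ ^ 2 ≤ RCLike.re (inner 𝕜 x (T x)) :=
        OrthonormalBasis.mul_norm_sq_le_re_inner_map_self hT ht hxS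
    _ = RCLike.re (inner 𝕜 x (T' x)) := by rw [hTx]
    _ ≤ s * ‖x‖ ^ 2 := OrthonormalBasis.re_inner_map_self_le_mul_norm_sq hT' hs hxS'

theorem eigenvalue_add_le_of_finrank_range_sub_le {n r : ℕ} {b b' : OrthonormalBasis (Fin n) 𝕜 E}
    {T T' : E →ₗ[𝕜] E} {α β : Fin n → ℝ} (hT : ∀ i, T (b i) = (α i : 𝕜) • b i)
    (hT' : ∀ i, T' (b' i) = (β i : 𝕜) • b' i) (hα : Antitone α) (hβ : Antitone β)
    (hr : finrank 𝕜 (range (T - T')) ≤ r) (k : Fin n) (h : k + r < n) :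
    α ⟨k + r, h⟩ ≤ β k := by
  have : FiniteDimensional 𝕜 E := .of_basis b.toBasis
  set U := span 𝕜 (b '' Finset.Iic (⟨k + r, h⟩ : Fin n))
  set V := span 𝕜 (b' '' Finset.Ici k)
  have hE : finrank 𝕜 E = n := by simp [finrank_eq_card_basis b.toBasis]
  have hU : finrank 𝕜 U = k + r + 1 := by simp [U, b.finrank_span_image]
  have hV : finrank 𝕜 V = n - k := by simp [V, b'.finrank_span_image]
  have hK := (T - T').finrank_range_add_finrank_ker
  obtain ⟨x, ⟨⟨hxU, hxV⟩, hxK⟩, hx⟩ := exists_mem_ne_zero_of_ne_bot <|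
    inf_inf_ne_bot_of_finrank_lt (U := U) (W := V) (X := ker (T - T')) (by omega)
  refine le_of_apply_eq_of_mem_span_eigenvectors hT hT' (fun i hi => hα ?_) (fun i hi => hβ ?_)
    hx hxU hxV (sub_eq_zero.mp hxK)
  · simpa using hi
  · simpa using hi

end LinearMap

theorem Matrix.IsHermitian.toEuclideanLin_eigenvectorBasis {𝕜 ι : Type*} [RCLike 𝕜] [Fintype ι]
    [DecidableEq ι] {A : Matrix ι ι 𝕜} (hA : A.IsHermitian) (i : ι) :
    toEuclideanLin A (hA.eigenvectorBasis i) = (hA.eigenvalues i : 𝕜) • hA.eigenvectorBasis i := by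
  apply WithLp.ofLp_injective
  rw [ofLp_toLpLin, toLin'_apply, hA.mulVec_eigenvectorBasis,
    RCLike.real_smul_eq_coe_smul (K := 𝕜)]
  rfl

theorem Matrix.rank_eq_finrank_range_toEuclideanLin {𝕜 m ι : Type*} [RCLike 𝕜] [Fintype m]
    [Fintype ι] [DecidableEq ι] (M : Matrix m ι 𝕜) :
    M.rank = finrank 𝕜 (LinearMap.range (toEuclideanLin M)) :=
  M.rank_eq_finrank_range_toLin (PiLp.basisFun 2 𝕜 m) (PiLp.basisFun 2 𝕜 ι)

theorem IsEigSeq.exists_orthonormalBasis {n : ℕ} {A : Matrix (Fin n) (Fin n) ℂ}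
    {hA : A.IsHermitian} {α : Fin n → ℝ} (hα : IsEigSeq A hA α) :
    ∃ b : OrthonormalBasis (Fin n) ℂ (EuclideanSpace ℂ (Fin n)),
      ∀ i, toEuclideanLin A (b i) = (α i : ℂ) • b i := by
  obtain ⟨-, σ, hσ⟩ := hα
  refine ⟨hA.eigenvectorBasis.reindex σ.symm, fun i => ?_⟩
  rw [OrthonormalBasis.reindex_apply, Equiv.symm_symm, hσ]
  exact hA.toEuclideanLin_eigenvectorBasis _

/-- Rank perturbation interlacing: if Hermitian `A` and `B` differ by a matrix
of rank at most `r`, then their decreasingly ordered eigenvalues satisfy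
`α_{k+r} ≤ β_k` and `β_{k+r} ≤ α_k` whenever `k + r ≤ n`
(0-based indices here). -/
theorem rank_perturbation_interlacing {n : ℕ} (r : ℕ)
    (A B : Matrix (Fin n) (Fin n) ℂ)
    (hA : A.IsHermitian) (hB : B.IsHermitian)
    (hrank : (A - B).rank ≤ r)
    (α β : Fin n → ℝ)
    (hα : IsEigSeq A hA α) (hβ : IsEigSeq B hB β) :
    ∀ (k : Fin n) (h : k.val + r < n),
      α ⟨k.val + r, h⟩ ≤ β k ∧ β ⟨k.val + r, h⟩ ≤ α k := by
  intro k h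
  obtain ⟨b, hb⟩ := hα.exists_orthonormalBasis
  obtain ⟨b', hb'⟩ := hβ.exists_orthonormalBasis
  have hr : finrank ℂ (LinearMap.range (toEuclideanLin A - toEuclideanLin B)) ≤ r := by
    rwa [← map_sub, ← rank_eq_finrank_range_toEuclideanLin]
  have hr' : finrank ℂ (LinearMap.range (toEuclideanLin B - toEuclideanLin A)) ≤ r := by
    rwa [← neg_sub, LinearMap.range_neg]
  exact ⟨LinearMap.eigenvalue_add_le_of_finrank_range_sub_le hb hb' hα.1 hβ.1 hr k h,
    LinearMap.eigenvalue_add_le_of_finrank_range_sub_le hb' hb hβ.1 hα.1 hr' k h⟩
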